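/- arXiv:1311.3143 — 3 statements merged into one kernel-verified Lean document; each statement's English description precedes it below -/
import Mathlib

section
/- Let d ≥ 2 and let j_z, λ ∈ ℂ. Let P_x = [[0,1],[1,0]] and P_z = [[1,0],[0,−1]] be Pauli matrices in Matrix (Fin 2) (Fin 2) ℂ, and let I denote the 2×2 identity. Define the Ising (ZZ) Hamiltonian entrywise as h : (Fin 2 × Fin 2)^d → ℂ, h((x_1,x'_1),…,(x_d,x'_d)) = j_z · Σ_{i=2}^d (∏_{k=1}^{i-2} I(x_k,x'_k)) · P_z(x_{i-1},x'_{i-1}) · P_z(x_i,x'_i) · (∏_{k=i+1}^d I(x_k,x'_k)) + λ · Σ_{i=1}^d (∏_{k=1}^{i-1} I(x_k,x'_k)) · P_x(x_i,x'_i) · (∏_{k=i+1}^d I(x_k,x'_k)). Then h admits a TT representation with all ranks at most 5. -/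
open scoped BigOperators

/-- `f` admits a tensor-train (TT) representation with ranks `r 0, …, r d`
(with `r 0 = r d = 1`): there are cores `G i` such that `f x` equals the `(0,0)`
entry of the matrix product `G 0 (x 0) * ⋯ * G (d-1) (x (d-1))`, written here as
the sum over all index paths (the boundary indices range over `Fin 1`). -/
def IsTTRep {R : Type*} [CommRing R] {d : ℕ} {α : Fin d → Type*}
    (f : (∀ i, α i) → R) (r : Fin (d + 1) → ℕ) : Prop :=
  r 0 = 1 ∧ r (Fin.last d) = 1 ∧
    ∃ G : ∀ i : Fin d, α i → Matrix (Fin (r i.castSucc)) (Fin (r i.succ)) R,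
      ∀ x : ∀ i, α i,
        f x = ∑ β : ∀ j : Fin (d + 1), Fin (r j),
                ∏ i : Fin d, G i (x i) (β i.castSucc) (β i.succ)

noncomputable def pauliX : Matrix (Fin 2) (Fin 2) ℂ := !![0, 1; 1, 0]
noncomputable def pauliY : Matrix (Fin 2) (Fin 2) ℂ := !![0, -Complex.I; Complex.I, 0]
noncomputable def pauliZ : Matrix (Fin 2) (Fin 2) ℂ := !![1, 0; 0, -1]

/-- The nearest-neighbour interaction sum
`Σ_{i=2}^d I ⊗ ⋯ ⊗ P ⊗ P ⊗ ⋯ ⊗ I`, written entrywise on the grouped index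
`x : Fin (n+2) → Fin 2 × Fin 2` (0-based: the pair indexed by `m : Fin (n+1)`
acts on positions `m.castSucc`, `m.succ`). -/
noncomputable def nnSum (n : ℕ) (P : Matrix (Fin 2) (Fin 2) ℂ)
    (x : Fin (n + 2) → Fin 2 × Fin 2) : ℂ :=
  ∑ m : Fin (n + 1),
    (∏ k ∈ Finset.univ.filter (fun k : Fin (n + 2) => (k : ℕ) < (m : ℕ)),
        (1 : Matrix (Fin 2) (Fin 2) ℂ) (x k).1 (x k).2)
    * P (x m.castSucc).1 (x m.castSucc).2 * P (x m.succ).1 (x m.succ).2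
    * ∏ k ∈ Finset.univ.filter (fun k : Fin (n + 2) => (m : ℕ) + 1 < (k : ℕ)),
        (1 : Matrix (Fin 2) (Fin 2) ℂ) (x k).1 (x k).2

/-- The one-site sum `Σ_{i=1}^d I ⊗ ⋯ ⊗ P ⊗ ⋯ ⊗ I`, entrywise on the grouped
index `x : Fin (n+2) → Fin 2 × Fin 2`. -/
noncomputable def siteSum (n : ℕ) (P : Matrix (Fin 2) (Fin 2) ℂ)
    (x : Fin (n + 2) → Fin 2 × Fin 2) : ℂ :=
  ∑ i : Fin (n + 2),
    (∏ k ∈ Finset.univ.filter (fun k : Fin (n + 2) => (k : ℕ) < (i : ℕ)),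
        (1 : Matrix (Fin 2) (Fin 2) ℂ) (x k).1 (x k).2)
    * P (x i).1 (x i).2
    * ∏ k ∈ Finset.univ.filter (fun k : Fin (n + 2) => (i : ℕ) < (k : ℕ)),
        (1 : Matrix (Fin 2) (Fin 2) ℂ) (x k).1 (x k).2

/-! The Hamiltonian is the corner entry `(0, 2)` of the product `W(x₁) ⋯ W(x_d)` of the
`3 × 3` matrices `W(p) = [[I, Z, λX], [0, 0, j_z Z], [0, 0, I]]` (with `I, Z, X` evaluated at the
site index `p`): a path through the states `0 → ⋯ → 2` either jumps `0 → 2` once, picking up one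
`λX`, or goes `0 → 1 → 2` on two adjacent sites, picking up `Z ⊗ j_z Z`, with identities elsewhere.
Expanding a corner entry of a product of `k × k` matrices as a sum over index paths is exactly a
TT representation with ranks `1, k, …, k, 1`; here `k = 3 ≤ 5`. -/

open Finset

theorem Matrix.list_prod_ofFn_apply {n R : Type*} [Fintype n] [DecidableEq n] [CommSemiring R] :
    ∀ {d : ℕ} (M : Fin (d + 1) → Matrix n n R) (a b : n),
      (List.ofFn M).prod a b = ∑ γ : Fin d → n,
        ∏ i, M i ((Fin.cons a (Fin.snoc γ b) : Fin (d + 2) → n) i.castSucc)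
          ((Fin.cons a (Fin.snoc γ b) : Fin (d + 2) → n) i.succ)
  | 0, M, a, b => by simp [Fin.snoc]
  | d + 1, M, a, b => by
    rw [List.ofFn_succ, List.prod_cons, Matrix.mul_apply,
      ← (Fin.consEquiv fun _ => n).sum_comp, Fintype.sum_prod_type]
    refine sum_congr rfl fun c _ => ?_
    rw [Matrix.list_prod_ofFn_apply, mul_sum]
    refine sum_congr rfl fun γ _ => ?_
    change _ = ∏ i, M i ((Fin.cons a (Fin.snoc (Fin.cons c γ) b) : Fin (d + 3) → n) i.castSucc)
      ((Fin.cons a (Fin.snoc (Fin.cons c γ) b) : Fin (d + 3) → n) i.succ)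
    rw [← Fin.cons_snoc_eq_snoc_cons, Fin.prod_univ_succ (n := d + 1)]
    simp only [Fin.castSucc_zero, Fin.cons_zero, Fin.cons_succ, ← Fin.succ_castSucc]

def ttRanks (d k : ℕ) (j : Fin (d + 2)) : ℕ :=
  if (j : ℕ) = 0 ∨ (j : ℕ) = d + 1 then 1 else k

lemma ttRanks_le {d k : ℕ} (hk : 0 < k) (j : Fin (d + 2)) : ttRanks d k j ≤ k := by
  unfold ttRanks; split <;> omega

lemma ttRanks_castSucc_succ (d k : ℕ) (i : Fin d) : ttRanks d k i.castSucc.succ = k := by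
  rw [ttRanks, if_neg (by simp; omega)]

def ttBondEquiv (d k : ℕ) : (Fin d → Fin k) ≃ ∀ j, Fin (ttRanks d k j) where
  toFun γ j :=
    if h : (j : ℕ) = 0 ∨ (j : ℕ) = d + 1 then ⟨0, by rw [ttRanks, if_pos h]; exact one_pos⟩
    else ⟨γ ⟨j - 1, by omega⟩, by rw [ttRanks, if_neg h]; exact (γ _).isLt⟩
  invFun β i := Fin.cast (ttRanks_castSucc_succ d k i) (β i.castSucc.succ)
  left_inv γ := by
    ext i
    simp [i.isLt.ne]
  right_inv β := by
    ext j
    by_cases h : (j : ℕ) = 0 ∨ (j : ℕ) = d + 1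
    · have : (β j : ℕ) < 1 := (β j).isLt.trans_le (by rw [ttRanks, if_pos h])
      simp only [dif_pos h]
      omega
    · simp only [dif_neg h, Fin.cast]
      congr 2 <;> exact Fin.ext (by simp only [Fin.val_succ, Fin.val_castSucc]; omega)

/-- Bond `j` of the representation, read as an index of the `k × k` matrices: the two
boundary bonds are pinned to the corner `(a, b)`. -/
def ttBondIndex {d k : ℕ} (a b : Fin k) (j : Fin (d + 2)) (u : Fin (ttRanks d k j)) : Fin k :=
  if (j : ℕ) = 0 then a else if (j : ℕ) = d + 1 then b
  else Fin.castLE (ttRanks_le (Fin.pos a) j) u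

lemma ttBondIndex_ttBondEquiv {d k : ℕ} (a b : Fin k) (γ : Fin d → Fin k) (j : Fin (d + 2)) :
    ttBondIndex a b j (ttBondEquiv d k γ j)
      = (Fin.cons a (Fin.snoc γ b) : Fin (d + 2) → Fin k) j := by
  induction j using Fin.cases with
  | zero => simp [ttBondIndex]
  | succ j =>
    induction j using Fin.lastCases with
    | last => simp [ttBondIndex]
    | cast i => simp [ttBondIndex, ttBondEquiv, i.isLt.ne]

theorem isTTRep_list_prod_apply {R : Type*} [CommRing R] {d k : ℕ} {α : Fin (d + 1) → Type*}
    (M : ∀ i, α i → Matrix (Fin k) (Fin k) R) (a b : Fin k) :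
    IsTTRep (fun x => (List.ofFn fun i => M i (x i)).prod a b) (ttRanks d k) := by
  refine ⟨by simp [ttRanks], by simp [ttRanks],
    fun i y u v => M i y (ttBondIndex a b _ u) (ttBondIndex a b _ v), fun x => ?_⟩
  dsimp only
  rw [Matrix.list_prod_ofFn_apply, ← (ttBondEquiv d k).sum_comp]
  simp only [ttBondIndex_ttBondEquiv]

section NearestNeighbourMPO

variable {R : Type*} [CommSemiring R]

def nnMPO (A B C D E : R) : Matrix (Fin 3) (Fin 3) R := !![A, B, C; 0, 0, D; 0, 0, E]

section

variable (X : Matrix (Fin 3) (Fin 3) R) (a b c d e : R) (i : Fin 3)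

lemma mul_nnMPO_apply_zero : (X * nnMPO a b c d e) i 0 = X i 0 * a := by
  simp [nnMPO, Matrix.mul_apply, Fin.sum_univ_three]

lemma mul_nnMPO_apply_one : (X * nnMPO a b c d e) i 1 = X i 0 * b := by
  simp [nnMPO, Matrix.mul_apply, Fin.sum_univ_three]

lemma mul_nnMPO_apply_two :
    (X * nnMPO a b c d e) i 2 = X i 0 * c + X i 1 * d + X i 2 * e := by
  simp [nnMPO, Matrix.mul_apply, Fin.sum_univ_three]

end

variable (A B C D E : ℕ → R)

lemma nnMPO_prod_succ (t : ℕ) :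
    (List.ofFn fun i : Fin (t + 1) => nnMPO (A i) (B i) (C i) (D i) (E i)).prod
      = (List.ofFn fun i : Fin t => nnMPO (A i) (B i) (C i) (D i) (E i)).prod
        * nnMPO (A t) (B t) (C t) (D t) (E t) := by
  simp [List.ofFn_succ', -List.ofFn_succ]

lemma nnMPO_prod_apply_zero_zero (t : ℕ) :
    (List.ofFn fun i : Fin t => nnMPO (A i) (B i) (C i) (D i) (E i)).prod 0 0
      = ∏ k ∈ range t, A k := by
  induction t with
  | zero => simp
  | succ t ih => rw [nnMPO_prod_succ, mul_nnMPO_apply_zero, ih, prod_range_succ]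

lemma nnMPO_prod_succ_apply_zero_one (t : ℕ) :
    (List.ofFn fun i : Fin (t + 1) => nnMPO (A i) (B i) (C i) (D i) (E i)).prod 0 1
      = (∏ k ∈ range t, A k) * B t := by
  rw [nnMPO_prod_succ, mul_nnMPO_apply_one, nnMPO_prod_apply_zero_zero]

lemma nnMPO_prod_apply_zero_two (t : ℕ) :
    (List.ofFn fun i : Fin t => nnMPO (A i) (B i) (C i) (D i) (E i)).prod 0 2
      = ∑ i ∈ range t, (∏ k ∈ range i, A k) * C i * ∏ k ∈ Ico (i + 1) t, E k
        + ∑ i ∈ range (t - 1),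
            (∏ k ∈ range i, A k) * B i * D (i + 1) * ∏ k ∈ Ico (i + 2) t, E k := by
  induction t with
  | zero => simp
  | succ t ih =>
    have site :
        ∑ i ∈ range (t + 1), (∏ k ∈ range i, A k) * C i * ∏ k ∈ Ico (i + 1) (t + 1), E k
          = (∏ k ∈ range t, A k) * C t
            + (∑ i ∈ range t, (∏ k ∈ range i, A k) * C i * ∏ k ∈ Ico (i + 1) t, E k) * E t := by
      rw [sum_range_succ, Ico_self, prod_empty, mul_one, add_comm, sum_mul]
      congr 1
      refine sum_congr rfl fun i hi => ?_
      rw [prod_Ico_succ_top (by simp at hi; omega)]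
      ring
    have bond :
        ∑ i ∈ range t, (∏ k ∈ range i, A k) * B i * D (i + 1) * ∏ k ∈ Ico (i + 2) (t + 1), E k
          = (List.ofFn fun i : Fin t => nnMPO (A i) (B i) (C i) (D i) (E i)).prod 0 1 * D t
            + (∑ i ∈ range (t - 1),
                (∏ k ∈ range i, A k) * B i * D (i + 1) * ∏ k ∈ Ico (i + 2) t, E k) * E t := by
      cases t with
      | zero => simp
      | succ s =>
        rw [sum_range_succ, Ico_self, prod_empty, mul_one, nnMPO_prod_succ_apply_zero_one,
          Nat.add_sub_cancel, add_comm, sum_mul]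
        congr 1
        refine sum_congr rfl fun i hi => ?_
        rw [prod_Ico_succ_top (by simp at hi; omega)]
        ring
    rw [nnMPO_prod_succ, mul_nnMPO_apply_two, nnMPO_prod_apply_zero_zero, ih, site,
      Nat.add_sub_cancel, bond]
    ring

end NearestNeighbourMPO

lemma Fin.prod_filter_val_lt {M : Type*} [CommMonoid M] {d m : ℕ} (hm : m ≤ d) (g : ℕ → M) :
    ∏ k ∈ univ.filter (fun k : Fin d => (k : ℕ) < m), g k = ∏ k ∈ range m, g k := by
  rw [prod_filter, Fin.prod_univ_eq_prod_range (fun k => if k < m then g k else 1),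
    ← prod_filter]
  congr 1
  ext k
  simp only [mem_filter, mem_range]
  omega

lemma Fin.prod_filter_lt_val {M : Type*} [CommMonoid M] (d m : ℕ) (g : ℕ → M) :
    ∏ k ∈ univ.filter (fun k : Fin d => m < (k : ℕ)), g k = ∏ k ∈ Ico (m + 1) d, g k := by
  rw [prod_filter, Fin.prod_univ_eq_prod_range (fun k => if m < k then g k else 1),
    ← prod_filter]
  congr 1
  ext k
  simp only [mem_filter, mem_range, mem_Ico]
  omega

local notation "𝕀" => (1 : Matrix (Fin 2) (Fin 2) ℂ)

lemma siteSum_eq_sum_range (n : ℕ) (P : Matrix (Fin 2) (Fin 2) ℂ) (y : ℕ → Fin 2 × Fin 2) :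
    siteSum n P (fun k => y k)
      = ∑ i ∈ range (n + 2), (∏ k ∈ range i, 𝕀 (y k).1 (y k).2) * P (y i).1 (y i).2
          * ∏ k ∈ Ico (i + 1) (n + 2), 𝕀 (y k).1 (y k).2 := by
  rw [siteSum, ← Fin.sum_univ_eq_sum_range]
  refine sum_congr rfl fun i _ => ?_
  rw [Fin.prod_filter_val_lt i.isLt.le (fun k => 𝕀 (y k).1 (y k).2),
    Fin.prod_filter_lt_val _ _ (fun k => 𝕀 (y k).1 (y k).2)]

lemma nnSum_eq_sum_range (n : ℕ) (P : Matrix (Fin 2) (Fin 2) ℂ) (y : ℕ → Fin 2 × Fin 2) :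
    nnSum n P (fun k => y k)
      = ∑ i ∈ range (n + 1), (∏ k ∈ range i, 𝕀 (y k).1 (y k).2)
          * P (y i).1 (y i).2 * P (y (i + 1)).1 (y (i + 1)).2
          * ∏ k ∈ Ico (i + 2) (n + 2), 𝕀 (y k).1 (y k).2 := by
  rw [nnSum, ← Fin.sum_univ_eq_sum_range]
  refine sum_congr rfl fun i _ => ?_
  rw [Fin.prod_filter_val_lt (by omega) (fun k => 𝕀 (y k).1 (y k).2),
    Fin.prod_filter_lt_val _ _ (fun k => 𝕀 (y k).1 (y k).2)]
  simp only [Fin.val_castSucc, Fin.val_succ]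

noncomputable def isingMPO (jz lam : ℂ) (p : Fin 2 × Fin 2) : Matrix (Fin 3) (Fin 3) ℂ :=
  nnMPO (𝕀 p.1 p.2) (pauliZ p.1 p.2) (lam * pauliX p.1 p.2) (jz * pauliZ p.1 p.2) (𝕀 p.1 p.2)

lemma ising_eq_isingMPO_prod_apply (n : ℕ) (jz lam : ℂ) (y : ℕ → Fin 2 × Fin 2) :
    jz * nnSum n pauliZ (fun k => y k) + lam * siteSum n pauliX (fun k => y k)
      = (List.ofFn fun i : Fin (n + 2) => isingMPO jz lam (y i)).prod 0 2 := by
  rw [nnSum_eq_sum_range, siteSum_eq_sum_range]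
  simp only [isingMPO]
  rw [nnMPO_prod_apply_zero_two (fun k => 𝕀 (y k).1 (y k).2) (fun k => pauliZ (y k).1 (y k).2)
    (fun k => lam * pauliX (y k).1 (y k).2) (fun k => jz * pauliZ (y k).1 (y k).2)
    (fun k => 𝕀 (y k).1 (y k).2)]
  simp only [mul_sum]
  rw [add_comm]
  congr 1 <;> refine sum_congr rfl fun i _ => by ring

/-- **The Ising (ZZ) Hamiltonian admits a rank-5 TT representation**
(Lemma 4.5 of the paper). The number of spins is `d = n + 2 ≥ 2`. -/
theorem ising_ZZ_tt_rank_le_five (n : ℕ) (jz lam : ℂ) :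
    ∃ r : Fin (n + 3) → ℕ, (∀ j, r j ≤ 5) ∧
      IsTTRep (fun x : Fin (n + 2) → Fin 2 × Fin 2 =>
        jz * nnSum n pauliZ x
          + lam * siteSum n pauliX x) r := by
  refine ⟨ttRanks (n + 1) 3, fun j => (ttRanks_le three_pos j).trans (by norm_num), ?_⟩
  have hMPO : (fun x : Fin (n + 2) → Fin 2 × Fin 2 =>
        jz * nnSum n pauliZ x + lam * siteSum n pauliX x)
      = fun x => (List.ofFn fun i => isingMPO jz lam (x i)).prod 0 2 := by
    funext x
    obtain ⟨y, rfl⟩ : ∃ y : ℕ → Fin 2 × Fin 2, x = fun k : Fin (n + 2) => y k :=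
      ⟨fun m => if h : m < n + 2 then x ⟨m, h⟩ else x 0, funext fun k => by simp⟩
    exact ising_eq_isingMPO_prod_apply n jz lam y
  rw [hMPO]
  exact isTTRep_list_prod_apply (fun _ => isingMPO jz lam) 0 2
end

section
/- Let L ≥ 2 and κ, φ ∈ ℝ. The function f : (Fin 2)^L → ℝ defined by f(x_1,…,x_L) = sin(κ · Σ_{l=1}^L (x_l : ℝ)·2^{l-1} + φ) admits a TT representation with all ranks at most 2. (This is the rank-2 QTT representation of a sampled sine function.) -/
open scoped BigOperators

open scoped Matrix

/-! The core of digit `x_l` is the matrix of multiplication by `exp(i κ 2^l x_l)` on `ℂ ≅ ℝ²`,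
with the phase `φ - π/2` absorbed into the first core. These `2 × 2` matrices multiply like the
complex numbers they represent, so the `(0,0)` entry of their product is
`Re exp(i(κx + φ - π/2)) = sin(κx + φ)`. A matrix-product formula read off at entry `(0,0)` is a TT
representation with ranks `(1, m, …, m, 1)`: keep only row `0` of the first core and column `0`
of the last one. -/

theorem Matrix.dotProduct_list_prod_ofFn_mulVec {R ι : Type*} [CommSemiring R] [Fintype ι]
    [DecidableEq ι] {d : ℕ} (M : Fin d → Matrix ι ι R) (u v : ι → R) :
    u ⬝ᵥ ((List.ofFn M).prod *ᵥ v) =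
      ∑ γ : Fin (d + 1) → ι,
        u (γ 0) * (∏ i, M i (γ i.castSucc) (γ i.succ)) * v (γ (Fin.last d)) := by
  induction d generalizing u with
  | zero =>
    rw [← (Equiv.funUnique (Fin 1) ι).symm.sum_comp]
    simp [dotProduct]
  | succ d ih =>
    rw [List.ofFn_succ, List.prod_cons, ← Matrix.mulVec_mulVec, Matrix.dotProduct_mulVec, ih,
      ← (Fin.consEquiv fun _ : Fin (d + 2) => ι).sum_comp, Fintype.sum_prod_type, Finset.sum_comm]
    refine Fintype.sum_congr _ _ fun γ => ?_
    simp only [Fin.consEquiv_apply, Fin.prod_univ_succ, Fin.cons_zero, Fin.castSucc_zero,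
      ← Fin.succ_castSucc, Fin.cons_succ, ← Fin.succ_last, Matrix.vecMul, dotProduct,
      Finset.sum_mul]
    refine Fintype.sum_congr _ _ fun c => ?_
    ring

theorem Fintype.sum_pi_castLE {ι R : Type*} [Fintype ι] [DecidableEq ι] [AddCommMonoid R]
    {m : ℕ} {r : ι → ℕ} (h : ∀ j, r j ≤ m) (g : (ι → Fin m) → R) :
    ∑ β : ∀ j, Fin (r j), g (fun j => Fin.castLE (h j) (β j)) =
      ∑ γ with ∀ j, (γ j : ℕ) < r j, g γ := by
  refine Finset.sum_bij' (fun β _ j => Fin.castLE (h j) (β j))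
    (fun γ hγ j => ⟨γ j, (Finset.mem_filter.1 hγ).2 j⟩) ?_ ?_ ?_ ?_ ?_
  all_goals intros; simp_all

def uniformTTRanks (d m : ℕ) : Fin (d + 1) → ℕ :=
  fun j => if j = 0 ∨ j = Fin.last d then 1 else m

theorem uniformTTRanks_le {d m : ℕ} [NeZero m] (j : Fin (d + 1)) : uniformTTRanks d m j ≤ m := by
  unfold uniformTTRanks
  split_ifs
  exacts [NeZero.one_le, le_rfl]

theorem forall_lt_uniformTTRanks_iff {d m : ℕ} [NeZero m] (γ : Fin (d + 1) → Fin m) :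
    (∀ j, (γ j : ℕ) < uniformTTRanks d m j) ↔ γ 0 = 0 ∧ γ (Fin.last d) = 0 := by
  refine ⟨fun h => ⟨?_, ?_⟩, fun ⟨h0, hlast⟩ j => ?_⟩
  · exact Fin.ext (Nat.lt_one_iff.1 (by simpa [uniformTTRanks] using h 0))
  · exact Fin.ext (Nat.lt_one_iff.1 (by simpa [uniformTTRanks] using h (Fin.last d)))
  · unfold uniformTTRanks
    split_ifs with hj
    · rcases hj with rfl | rfl <;> simp [h0, hlast]
    · exact (γ j).isLt

theorem isTTRep_uniformTTRanks_of_eq_list_prod {R : Type*} [CommRing R] {d m : ℕ} [NeZero m]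
    {α : Fin d → Type*} (f : (∀ i, α i) → R) (M : ∀ i, α i → Matrix (Fin m) (Fin m) R)
    (hf : ∀ x, f x = (List.ofFn fun i => M i (x i)).prod 0 0) :
    IsTTRep f (uniformTTRanks d m) := by
  refine ⟨if_pos (Or.inl rfl), if_pos (Or.inr rfl),
    fun i a p q => M i a (Fin.castLE (uniformTTRanks_le _) p) (Fin.castLE (uniformTTRanks_le _) q),
    fun x => ?_⟩
  have hentry (P : Matrix (Fin m) (Fin m) R) :
      P 0 0 = Pi.single 0 1 ⬝ᵥ (P *ᵥ Pi.single 0 1) := by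
    simp
  rw [hf,
    Fintype.sum_pi_castLE uniformTTRanks_le fun γ => ∏ i, M i (x i) (γ i.castSucc) (γ i.succ),
    hentry (List.ofFn _).prod, Matrix.dotProduct_list_prod_ofFn_mulVec, Finset.sum_filter]
  refine Fintype.sum_congr _ _ fun γ => ?_
  simp only [forall_lt_uniformTTRanks_iff, Pi.single_apply, ite_mul, one_mul, zero_mul, mul_ite,
    mul_one, mul_zero]
  rw [← ite_and]
  exact if_congr and_comm rfl rfl

theorem Complex.list_prod_ofFn_leftMulMatrix_basisOneI_apply_zero_zero {d : ℕ} (z : Fin d → ℂ) :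
    (List.ofFn fun i => Algebra.leftMulMatrix Complex.basisOneI (z i)).prod 0 0 =
      (∏ i, z i).re := by
  rw [← Function.comp_def, ← List.map_ofFn, ← map_list_prod, List.prod_ofFn,
    Algebra.leftMulMatrix_complex]
  rfl

/-- **Rank-2 QTT representation of a sampled sine**: the function
`x ↦ sin(κ x + φ)` sampled at `x = Σ_l x_l 2^(l-1)`, `x_l ∈ {0,1}`,
`L = n + 2 ≥ 2` binary digits, admits a TT representation with all ranks
at most 2. -/
theorem qtt_sin_rank_le_two (n : ℕ) (κ φ : ℝ) :
    ∃ r : Fin (n + 3) → ℕ, (∀ j, r j ≤ 2) ∧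
      IsTTRep (fun x : Fin (n + 2) → Fin 2 =>
        Real.sin (κ * (∑ l : Fin (n + 2), ((x l : ℕ) : ℝ) * 2 ^ (l : ℕ)) + φ)) r := by
  let θ (i : Fin (n + 2)) (a : Fin 2) : ℝ :=
    κ * (((a : ℕ) : ℝ) * 2 ^ (i : ℕ)) + if i = 0 then φ - Real.pi / 2 else 0
  refine ⟨uniformTTRanks (n + 2) 2, uniformTTRanks_le,
    isTTRep_uniformTTRanks_of_eq_list_prod _
      (fun i a => Algebra.leftMulMatrix Complex.basisOneI (Complex.exp (θ i a * Complex.I)))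
      fun x => ?_⟩
  have hphase : ∑ i, θ i (x i) = κ * (∑ l, ((x l : ℕ) : ℝ) * 2 ^ (l : ℕ)) + φ - Real.pi / 2 := by
    simp only [θ, Finset.sum_add_distrib, Finset.mul_sum, Finset.sum_ite_eq', Finset.mem_univ,
      if_true, add_sub_assoc]
  rw [Complex.list_prod_ofFn_leftMulMatrix_basisOneI_apply_zero_zero, ← Complex.exp_sum,
    ← Finset.sum_mul, ← Complex.ofReal_sum, Complex.exp_ofReal_mul_I_re, hphase,
    Real.cos_sub_pi_div_two]
end

section
/- Let R be a commutative ring and L ≥ 2. Define the shift matrix function s : (Fin 2 × Fin 2)^L → R on grouped binary indices by s((x_1,x'_1),…,(x_L,x'_L)) = 1 if Σ_{l=1}^L x'_l·2^{l-1} = Σ_{l=1}^L x_l·2^{l-1} + 1 (as natural numbers), and 0 otherwise. Then s admits a TT representation with all ranks at most 2. (This is the rank-2 QTT representation of the shift-by-one matrix of size 2^L.) -/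
/-!
Adding `1` to `x = ∑ x_l 2^l` is a two-state automaton read from the least significant digit:
the carry `c_l ∈ {0, 1}` entering position `l` must satisfy `x'_l + 2 c_{l+1} = x_l + c_l`, with
`c_0 = 1` and `c_L = 0`. The `(c, c')` entry of the product of the `2 × 2` transfer matrices is
`[x' + 2^L c' = x + c]`. Any entry `(s, t)` of a product of `m × m` matrices is a TT
representation with ranks `(1, m, …, m, 1)`: the inner bond indices run over the states, the
outer ones are pinned to `s` and `t`.
-/
open scoped BigOperators

open Finset

theorem Matrix.prod_ofFn_apply_eq_sum_paths {R σ : Type*} [CommSemiring R] [Fintype σ]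
    [DecidableEq σ] {L : ℕ} (M : Fin L → Matrix σ σ R) (s t : σ) :
    (List.ofFn M).prod s t =
      ∑ b : Fin (L + 1) → σ,
        if b 0 = s ∧ b (Fin.last L) = t then ∏ k, M k (b k.castSucc) (b k.succ) else 0 := by
  induction L generalizing s with
  | zero =>
    rw [← (Equiv.funUnique (Fin 1) σ).symm.sum_comp]
    simp [Matrix.one_apply, ite_and, eq_comm]
  | succ L ih =>
    rw [← (Fin.consEquiv fun _ => σ).sum_comp, Fintype.sum_prod_type]
    simp only [Fin.consEquiv_apply, Fin.cons_zero, Fin.prod_univ_succ, Fin.castSucc_zero,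
      Fin.cons_succ, ← Fin.succ_castSucc, ← Fin.succ_last, ite_and]
    simp only [sum_ite_irrel, sum_const_zero, sum_ite_eq', mem_univ, if_true]
    rw [List.ofFn_succ, List.prod_cons, Matrix.mul_apply]
    simp only [ih, mul_sum, mul_ite, mul_zero, ite_and]
    rw [sum_comm]
    simp only [sum_ite_eq, mem_univ, if_true]

def uniformRanks (n m : ℕ) : Fin (n + 2) → ℕ :=
  fun j => if j = 0 ∨ j = Fin.last (n + 1) then 1 else m

section UniformRanks

variable {n m : ℕ}

def bondState (s t : Fin m) (j : Fin (n + 2)) : Fin (uniformRanks n m j) → Fin m :=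
  if h₀ : j = 0 then fun _ => s
  else if hₗ : j = Fin.last (n + 1) then fun _ => t
  else Fin.cast (by simp [uniformRanks, h₀, hₗ])

theorem sum_comp_bondState {R : Type*} [AddCommMonoid R] (s t : Fin m)
    (F : (Fin (n + 2) → Fin m) → R) :
    ∑ β : ∀ j, Fin (uniformRanks n m j), F (fun j => bondState s t j (β j)) =
      ∑ b : Fin (n + 2) → Fin m, if b 0 = s ∧ b (Fin.last (n + 1)) = t then F b else 0 := by
  have h₀ : (0 : Fin (n + 2)) ≠ Fin.last (n + 1) := Fin.last_pos.ne
  rw [← sum_filter]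
  refine sum_nbij' (fun β j => bondState s t j (β j))
    (fun b j => if h : j = 0 ∨ j = Fin.last (n + 1) then ⟨0, by simp [uniformRanks, h]⟩
      else Fin.cast (by simp [uniformRanks, h]) (b j)) ?_ (by simp) ?_ ?_ (by simp)
  · intro β _
    simp [bondState, h₀.symm]
  · intro β _
    funext j
    by_cases h : j = 0 ∨ j = Fin.last (n + 1)
    · have hr : uniformRanks n m j = 1 := by simp [uniformRanks, h]
      have := (β j).isLt
      ext
      simp only [h, dite_true]
      omega
    · obtain ⟨hj₀, hjₗ⟩ := not_or.mp h
      ext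
      simp [bondState, hj₀, hjₗ]
  · intro b hb
    simp only [mem_filter, mem_univ, true_and] at hb
    funext j
    by_cases h : j = 0 ∨ j = Fin.last (n + 1)
    · rcases h with rfl | rfl <;> simp [bondState, hb, h₀.symm]
    · obtain ⟨hj₀, hjₗ⟩ := not_or.mp h
      simp [bondState, hj₀, hjₗ]

theorem isTTRep_of_eq_prod_apply {R : Type*} [CommRing R] {α : Fin (n + 1) → Type*}
    (M : ∀ i, α i → Matrix (Fin m) (Fin m) R) (s t : Fin m) (f : (∀ i, α i) → R)
    (hf : ∀ x, f x = (List.ofFn fun i => M i (x i)).prod s t) :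
    IsTTRep f (uniformRanks n m) := by
  refine ⟨by simp [uniformRanks], by simp [uniformRanks],
    fun i p β β' => M i p (bondState s t _ β) (bondState s t _ β'), fun x => ?_⟩
  rw [hf, Matrix.prod_ofFn_apply_eq_sum_paths]
  exact (sum_comp_bondState s t fun b => ∏ i, M i (x i) (b i.castSucc) (b i.succ)).symm

end UniformRanks

def carryMatrix (R : Type*) [Semiring R] (p : Fin 2 × Fin 2) : Matrix (Fin 2) (Fin 2) R :=
  Matrix.of fun c c' => if (p.2 : ℕ) + 2 * c' = p.1 + c then 1 else 0

theorem sum_carryMatrix_mul_ite {R : Type*} [Semiring R] (p : Fin 2 × Fin 2) (c : Fin 2)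
    (S T : ℕ) :
    ∑ e : Fin 2, carryMatrix R p c e * (if T = S + e then 1 else 0) =
      if (p.2 : ℕ) + 2 * T = p.1 + 2 * S + c then 1 else 0 := by
  have := p.1.isLt; have := p.2.isLt; have := c.isLt
  simp only [carryMatrix, Matrix.of_apply, Fin.sum_univ_two, Fin.val_zero, Fin.val_one]
  split_ifs <;> first | omega | simp

theorem Fin.sum_mul_pow_succ {R : Type*} [CommSemiring R] {L : ℕ} (f : Fin (L + 1) → R)
    (b : R) :
    ∑ l : Fin (L + 1), f l * b ^ (l : ℕ) = f 0 + b * ∑ l : Fin L, f l.succ * b ^ (l : ℕ) := by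
  simp only [Fin.sum_univ_succ, mul_sum, Fin.val_zero, pow_zero, mul_one, Fin.val_succ, pow_succ',
    mul_left_comm]

theorem prod_carryMatrix_apply {R : Type*} [Semiring R] {L : ℕ} (x : Fin L → Fin 2 × Fin 2)
    (c c' : Fin 2) :
    (List.ofFn fun l => carryMatrix R (x l)).prod c c' =
      if ∑ l, ((x l).2 : ℕ) * 2 ^ (l : ℕ) + 2 ^ L * c' = ∑ l, ((x l).1 : ℕ) * 2 ^ (l : ℕ) + c
      then 1 else 0 := by
  induction L generalizing c with
  | zero => simp [Matrix.one_apply, Fin.ext_iff, eq_comm]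
  | succ L ih =>
    rw [List.ofFn_succ, List.prod_cons, Matrix.mul_apply]
    simp only [ih fun l => x l.succ, sum_carryMatrix_mul_ite,
      Fin.sum_mul_pow_succ (fun l => ((x l).2 : ℕ)), Fin.sum_mul_pow_succ (fun l => ((x l).1 : ℕ))]
    rw [pow_succ', mul_assoc]
    exact if_congr (by omega) rfl rfl

/-- **Rank-2 QTT representation of the shift-by-one matrix** of size `2^L`,
`L = n + 2 ≥ 2`: the matrix `s(x, x') = [x' = x + 1]`, written entrywise on the
grouped binary digits `(x_l, x'_l) ∈ Fin 2 × Fin 2`, admits a TT representation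
with all ranks at most 2. -/
theorem qtt_shift_rank_le_two (R : Type*) [CommRing R] (n : ℕ) :
    ∃ r : Fin (n + 3) → ℕ, (∀ j, r j ≤ 2) ∧
      IsTTRep (fun x : Fin (n + 2) → Fin 2 × Fin 2 =>
        if (∑ l : Fin (n + 2), ((x l).2 : ℕ) * 2 ^ (l : ℕ))
            = (∑ l : Fin (n + 2), ((x l).1 : ℕ) * 2 ^ (l : ℕ)) + 1
        then (1 : R) else 0) r := by
  refine ⟨uniformRanks (n + 1) 2, fun j => by unfold uniformRanks; split_ifs <;> omega,
    isTTRep_of_eq_prod_apply (fun _ => carryMatrix R) 1 0 _ fun x => ?_⟩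
  rw [prod_carryMatrix_apply]
  simp
end
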